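/- For every τ ∈ ℍ and z ∈ ℂ such that Θ_{1,2}(τ,z) − Θ_{−1,2}(τ,z) ≠ 0, the normalized Weyl–Kac characters of ŝl₂ satisfy the identity between levels 16 and 8: χ^{(16)}_2(τ,z) + χ^{(16)}_{14}(τ,z) − χ^{(16)}_8(τ,z) = (χ^{(8)}_0(τ,z) + χ^{(8)}_8(τ,z))·(χ^{(8)}_2(τ,z) + χ^{(8)}_6(τ,z)) − (χ^{(8)}_4(τ,z))². -/

import Mathlib

/-!
Clearing the common denominator `Θ_{1,2} − Θ_{−1,2}`, the identity becomes one between signed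
sums of products `Θ_{m,18} Θ_{m',2}` on the left and `Θ_{a,10} Θ_{b,10}` on the right. If `u, v`
are the summation variables of such a product, the substitutions `A = (9u + v)/10, B = (u − v)/10`
resp. `A = (u + v)/2, B = (u − v)/6` turn `18u² + 2v²` resp. `10u² + 10v²` into `20A² + 180B²`,
and the coupling to `z` into `20A` in both cases. So each product is a finite sum of theta series
of the form `20A² + 180B²` over cosets `A ∈ ℤ + S/40, B ∈ ℤ + N/120`, which depend only on
`S mod 40` and on `N mod 120` up to sign. The identity thereby reduces to an equality of two finite
multisets of coset classes, which is decided by computation.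
-/

/-- The rank-one theta function `Θ_{m,k}(τ,z) = ∑_{n ∈ ℤ + m/(2k)} exp(2πik(n²τ + nz))`,
parameterized as `n = j + m/(2k)` with `j ∈ ℤ`. -/
noncomputable def Th1 (m : ℤ) (k : ℕ) (τ : UpperHalfPlane) (z : ℂ) : ℂ :=
  ∑' j : ℤ, Complex.exp (2 * Real.pi * Complex.I * (k : ℂ) *
    (((j : ℂ) + (m : ℂ) / (2 * (k : ℂ))) ^ 2 * (τ : ℂ) +
      ((j : ℂ) + (m : ℂ) / (2 * (k : ℂ))) * z))

/-- The normalized Weyl–Kac character `χ^{(k)}_λ` of the level-`k` integrable irreducible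
highest-weight module of highest weight `λ` over the affine Kac–Moody algebra `ŝl₂`:
`χ^{(k)}_λ = (Θ_{λ+1,k+2} − Θ_{−λ−1,k+2}) / (Θ_{1,2} − Θ_{−1,2})`. -/
noncomputable def chiA1 (k lam : ℕ) (τ : UpperHalfPlane) (z : ℂ) : ℂ :=
  (Th1 ((lam : ℤ) + 1) (k + 2) τ z - Th1 (-(lam : ℤ) - 1) (k + 2) τ z) /
    (Th1 1 2 τ z - Th1 (-1) 2 τ z)

open Complex

lemma summable_norm_Th1_term {k : ℕ} (hk : 0 < k) (c : ℂ) (τ : UpperHalfPlane) (z : ℂ) :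
    Summable fun j : ℤ => ‖cexp (2 * Real.pi * I * (k : ℂ) *
      (((j : ℂ) + c) ^ 2 * (τ : ℂ) + ((j : ℂ) + c) * z))‖ := by
  have hterm : ∀ j : ℤ, cexp (2 * Real.pi * I * (k : ℂ) *
      (((j : ℂ) + c) ^ 2 * (τ : ℂ) + ((j : ℂ) + c) * z)) =
      cexp (2 * Real.pi * I * k * (c ^ 2 * τ + c * z)) *
        jacobiTheta₂_term j (k * (z + 2 * c * τ)) (2 * k * τ) := fun j => by
    rw [jacobiTheta₂_term, ← Complex.exp_add]
    ring_nf
  have him : 0 < (2 * (k : ℂ) * τ).im := by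
    have : (0 : ℝ) < k := by exact_mod_cast hk
    simpa using mul_pos (mul_pos two_pos this) τ.im_pos
  simp_rw [hterm]
  exact summable_norm_iff.mpr
    (((summable_jacobiTheta₂_term_iff _ _).mpr him).mul_left _)

theorem tsum_mul_tsum_eq_sum_tsum_of_equiv {R α β ι γ : Type*} [NormedRing R] [CompleteSpace R]
    [Fintype ι] {f : α → R} {g : β → R} (hf : Summable fun a => ‖f a‖)
    (hg : Summable fun b => ‖g b‖) (e : ι × γ ≃ α × β) :
    (∑' a, f a) * (∑' b, g b) = ∑ i, ∑' c, f (e (i, c)).1 * g (e (i, c)).2 := by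
  rw [tsum_mul_tsum_of_summable_norm hf hg, ← e.tsum_eq,
    Summable.tsum_prod (f := fun c => f (e c).1 * g (e c).2)
      (e.summable_iff.mpr (summable_mul_of_summable_norm hf hg)), tsum_fintype]

noncomputable def cosetTheta (τ : UpperHalfPlane) (z : ℂ) (x : ℤ × ℤ) : ℂ :=
  ∑' pq : ℤ × ℤ, cexp (2 * Real.pi * I *
    ((20 * ((pq.1 : ℂ) + (x.1 : ℂ) / 40) ^ 2 + 180 * ((pq.2 : ℂ) + (x.2 : ℂ) / 120) ^ 2) * τ
      + 20 * ((pq.1 : ℂ) + (x.1 : ℂ) / 40) * z))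

section cosetTheta

variable (τ : UpperHalfPlane) (z : ℂ)

lemma cosetTheta_add_periods (S N t u : ℤ) :
    cosetTheta τ z (S + 40 * t, N + 120 * u) = cosetTheta τ z (S, N) := by
  rw [cosetTheta, cosetTheta, ← ((Equiv.subRight t).prodCongr (Equiv.subRight u)).tsum_eq]
  refine tsum_congr fun pq => congrArg cexp ?_
  simp only [Equiv.prodCongr_apply, Equiv.subRight_apply, Prod.map, Int.cast_add, Int.cast_sub,
    Int.cast_mul, Int.cast_ofNat]
  ring

lemma cosetTheta_neg_snd (S N : ℤ) : cosetTheta τ z (S, -N) = cosetTheta τ z (S, N) := by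
  rw [cosetTheta, cosetTheta, ← ((Equiv.refl ℤ).prodCongr (Equiv.neg ℤ)).tsum_eq]
  refine tsum_congr fun pq => congrArg cexp ?_
  simp only [Equiv.prodCongr_apply, Equiv.coe_refl, Equiv.neg_apply, Prod.map, id_eq,
    Int.cast_neg]
  ring

def cosetKey (x : ℤ × ℤ) : ℤ × ℤ := (x.1 % 40, min (x.2 % 120) (-x.2 % 120))

lemma cosetTheta_cosetKey (x : ℤ × ℤ) : cosetTheta τ z (cosetKey x) = cosetTheta τ z x := by
  obtain ⟨S, N⟩ := x
  rw [cosetKey]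
  rcases min_choice (N % 120) (-N % 120) with h | h <;> rw [h]
  · conv_rhs => rw [← Int.emod_add_mul_ediv S 40, ← Int.emod_add_mul_ediv N 120,
      cosetTheta_add_periods]
  · conv_rhs => rw [← cosetTheta_neg_snd, ← Int.emod_add_mul_ediv S 40,
      ← Int.emod_add_mul_ediv (-N) 120, cosetTheta_add_periods]

noncomputable def cosetThetaSum (L : List (ℤ × ℤ)) : ℂ := (L.map (cosetTheta τ z)).sum

lemma cosetThetaSum_append (L₁ L₂ : List (ℤ × ℤ)) :
    cosetThetaSum τ z (L₁ ++ L₂) = cosetThetaSum τ z L₁ + cosetThetaSum τ z L₂ := by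
  simp [cosetThetaSum]

lemma cosetThetaSum_eq_of_perm {L₁ L₂ : List (ℤ × ℤ)}
    (h : (L₁.map cosetKey).Perm (L₂.map cosetKey)) :
    cosetThetaSum τ z L₁ = cosetThetaSum τ z L₂ := by
  have hkey : ∀ L : List (ℤ × ℤ),
      cosetThetaSum τ z L = ((L.map cosetKey).map (cosetTheta τ z)).sum := fun L => by
    simp [cosetThetaSum, Function.comp_def, cosetTheta_cosetKey]
  rw [hkey, hkey]
  exact (h.map _).sum_eq

end cosetTheta

-- `(x, y)` indexes the product of the two theta series, `(P, q)` the coset series number `r`.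
def equiv18x2 : Fin 10 × ℤ × ℤ ≃ ℤ × ℤ where
  toFun x := (x.2.1 + x.2.2, x.2.1 - 9 * x.2.2 - x.1)
  invFun y := (⟨((y.1 - y.2) % 10).toNat, by omega⟩,
    (y.1 - (y.1 - y.2) / 10, (y.1 - y.2) / 10))
  left_inv := by
    rintro ⟨⟨r, hr⟩, P, q⟩
    refine Prod.ext (Fin.ext ?_) (Prod.ext ?_ ?_) <;> dsimp only <;> omega
  right_inv := by
    rintro ⟨x, y⟩
    refine Prod.ext ?_ ?_ <;> dsimp only <;> omega

def equiv10x10 : (Fin 2 × Fin 3) × ℤ × ℤ ≃ ℤ × ℤ where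
  toFun x := (x.2.1 + 3 * x.2.2 + x.1.2 + x.1.1, x.2.1 - 3 * x.2.2 - x.1.2)
  invFun y := ((⟨((y.1 + y.2) % 2).toNat, by omega⟩,
      ⟨((y.1 - y.2) / 2 % 3).toNat, by omega⟩),
    ((y.1 + y.2) / 2, (y.1 - y.2) / 6))
  left_inv := by
    rintro ⟨⟨⟨ε, hε⟩, ⟨i, hi⟩⟩, t, p⟩
    refine Prod.ext (Prod.ext (Fin.ext ?_) (Fin.ext ?_)) (Prod.ext ?_ ?_) <;> dsimp only <;> omega
  right_inv := by
    rintro ⟨x, y⟩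
    refine Prod.ext ?_ ?_ <;> dsimp only <;> omega

def cosetsMul18x2 (m m' : ℤ) : List (ℤ × ℤ) :=
  (List.finRange 10).map fun r : Fin 10 => (m + m' - 4 * (r : ℤ), 12 * (r : ℤ) + m / 3 - 3 * m')

def cosetsMul10x10 (a b : ℤ) : List (ℤ × ℤ) :=
  (List.finRange 2).flatMap fun ε : Fin 2 => (List.finRange 3).map fun i : Fin 3 =>
    (a + b + 20 * (ε : ℤ), a - b + 20 * (ε : ℤ) + 40 * (i : ℤ))

section products

variable (τ : UpperHalfPlane) (z : ℂ)

lemma Th1_18_mul_Th1_2 {m : ℤ} (hm : 3 ∣ m) (m' : ℤ) :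
    Th1 m 18 τ z * Th1 m' 2 τ z = cosetThetaSum τ z (cosetsMul18x2 m m') := by
  obtain ⟨e, rfl⟩ := hm
  rw [Th1, Th1, tsum_mul_tsum_eq_sum_tsum_of_equiv (summable_norm_Th1_term (by norm_num) _ τ z)
    (summable_norm_Th1_term (by norm_num) _ τ z) equiv18x2, cosetThetaSum, cosetsMul18x2,
    List.map_map, ← Fin.sum_univ_def, Int.mul_ediv_cancel_left _ three_ne_zero]
  refine Finset.sum_congr rfl fun r _ => tsum_congr fun pq => ?_
  rw [← Complex.exp_add]
  congr 1
  simp only [equiv18x2, Equiv.coe_fn_mk]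
  push_cast
  ring

lemma Th1_10_mul_Th1_10 (a b : ℤ) :
    Th1 a 10 τ z * Th1 b 10 τ z = cosetThetaSum τ z (cosetsMul10x10 a b) := by
  rw [Th1, Th1, tsum_mul_tsum_eq_sum_tsum_of_equiv (summable_norm_Th1_term (by norm_num) _ τ z)
    (summable_norm_Th1_term (by norm_num) _ τ z) equiv10x10, Fintype.sum_prod_type]
  simp only [cosetThetaSum, cosetsMul10x10, List.flatMap_def, List.map_flatten, List.sum_flatten,
    List.map_map, Function.comp_def, ← Fin.sum_univ_def]
  refine Finset.sum_congr rfl fun ε _ => Finset.sum_congr rfl fun i _ => tsum_congr fun pq => ?_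
  rw [← Complex.exp_add]
  congr 1
  simp only [equiv10x10, Equiv.coe_fn_mk]
  push_cast
  ring

end products

noncomputable def numA1 (k lam : ℕ) (τ : UpperHalfPlane) (z : ℂ) : ℂ :=
  Th1 ((lam : ℤ) + 1) (k + 2) τ z - Th1 (-(lam : ℤ) - 1) (k + 2) τ z

section numerators

variable (τ : UpperHalfPlane) (z : ℂ)

lemma chiA1_eq_div (k lam : ℕ) : chiA1 k lam τ z = numA1 k lam τ z / numA1 0 0 τ z := by
  simp [chiA1, numA1]

lemma numA1_16_mul_numA1_0 {lam : ℕ} (h : 3 ∣ (lam : ℤ) + 1) :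
    numA1 16 lam τ z * numA1 0 0 τ z =
      cosetThetaSum τ z (cosetsMul18x2 (lam + 1) 1 ++ cosetsMul18x2 (-lam - 1) (-1)) -
        cosetThetaSum τ z (cosetsMul18x2 (lam + 1) (-1) ++ cosetsMul18x2 (-lam - 1) 1) := by
  have h' : 3 ∣ -(lam : ℤ) - 1 := by omega
  simp only [numA1, cosetThetaSum_append, ← Th1_18_mul_Th1_2 τ z h, ← Th1_18_mul_Th1_2 τ z h',
    Nat.cast_zero, zero_add, neg_zero, zero_sub, Nat.reduceAdd]
  ring

lemma numA1_8_mul_numA1_8 (lam mu : ℕ) :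
    numA1 8 lam τ z * numA1 8 mu τ z =
      cosetThetaSum τ z
          (cosetsMul10x10 (lam + 1) (mu + 1) ++ cosetsMul10x10 (-lam - 1) (-mu - 1)) -
        cosetThetaSum τ z
          (cosetsMul10x10 (lam + 1) (-mu - 1) ++ cosetsMul10x10 (-lam - 1) (mu + 1)) := by
  simp only [numA1, cosetThetaSum_append, ← Th1_10_mul_Th1_10]
  ring

lemma numA1_identity :
    (numA1 16 2 τ z + numA1 16 14 τ z - numA1 16 8 τ z) * numA1 0 0 τ z =
      (numA1 8 0 τ z + numA1 8 8 τ z) * (numA1 8 2 τ z + numA1 8 6 τ z) - numA1 8 4 τ z ^ 2 := by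
  -- the cosets of the `+` terms on the left and the `−` terms on the right, against the rest
  have hperm := cosetThetaSum_eq_of_perm τ z
    (L₁ := cosetsMul18x2 3 1 ++ cosetsMul18x2 (-3) (-1) ++ cosetsMul18x2 15 1 ++
      cosetsMul18x2 (-15) (-1) ++ cosetsMul18x2 9 (-1) ++ cosetsMul18x2 (-9) 1 ++
      cosetsMul10x10 1 (-3) ++ cosetsMul10x10 (-1) 3 ++ cosetsMul10x10 1 (-7) ++
      cosetsMul10x10 (-1) 7 ++ cosetsMul10x10 9 (-3) ++ cosetsMul10x10 (-9) 3 ++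
      cosetsMul10x10 9 (-7) ++ cosetsMul10x10 (-9) 7 ++ cosetsMul10x10 5 5 ++
      cosetsMul10x10 (-5) (-5))
    (L₂ := cosetsMul18x2 3 (-1) ++ cosetsMul18x2 (-3) 1 ++ cosetsMul18x2 15 (-1) ++
      cosetsMul18x2 (-15) 1 ++ cosetsMul18x2 9 1 ++ cosetsMul18x2 (-9) (-1) ++
      cosetsMul10x10 1 3 ++ cosetsMul10x10 (-1) (-3) ++ cosetsMul10x10 1 7 ++
      cosetsMul10x10 (-1) (-7) ++ cosetsMul10x10 9 3 ++ cosetsMul10x10 (-9) (-3) ++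
      cosetsMul10x10 9 7 ++ cosetsMul10x10 (-9) (-7) ++ cosetsMul10x10 5 (-5) ++
      cosetsMul10x10 (-5) 5)
    (by decide)
  have h2 := numA1_16_mul_numA1_0 τ z (lam := 2) (by norm_num)
  have h14 := numA1_16_mul_numA1_0 τ z (lam := 14) (by norm_num)
  have h8 := numA1_16_mul_numA1_0 τ z (lam := 8) (by norm_num)
  have h02 := numA1_8_mul_numA1_8 τ z 0 2
  have h06 := numA1_8_mul_numA1_8 τ z 0 6
  have h82 := numA1_8_mul_numA1_8 τ z 8 2
  have h86 := numA1_8_mul_numA1_8 τ z 8 6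
  have h44 := numA1_8_mul_numA1_8 τ z 4 4
  norm_num [cosetThetaSum_append] at *
  linear_combination h2 + h14 - h8 - h02 - h06 - h82 - h86 + h44 + hperm

end numerators

/-- The identity between normalized Weyl–Kac characters of `ŝl₂` at levels 16 and 8:
`χ^{(16)}₂ + χ^{(16)}₁₄ − χ^{(16)}₈ = (χ^{(8)}₀ + χ^{(8)}₈)(χ^{(8)}₂ + χ^{(8)}₆) − (χ^{(8)}₄)²`. -/
theorem affine_sl2_character_identity_level16_level8 (τ : UpperHalfPlane) (z : ℂ)
    (h : Th1 1 2 τ z - Th1 (-1) 2 τ z ≠ 0) :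
    chiA1 16 2 τ z + chiA1 16 14 τ z - chiA1 16 8 τ z =
      (chiA1 8 0 τ z + chiA1 8 8 τ z) * (chiA1 8 2 τ z + chiA1 8 6 τ z) -
        (chiA1 8 4 τ z) ^ 2 := by
  have hden : numA1 0 0 τ z ≠ 0 := by simpa [numA1] using h
  simp only [chiA1_eq_div]
  field_simp
  linear_combination numA1_identity τ z
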